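/- arXiv:0804.0686 — 2 statements merged into one kernel-verified Lean document; each statement's English description precedes it below -/
import Mathlib

section
/- For any distributions P, P̄ on a finite set Y, any [0,1]-valued test function f on Y, and any s ≤ 0: (E_P[1−f])^{1−s} · (E_{P̄}[1−f])^s ≤ Σ_y P̄(y)^s P(y)^{1-s}. -/
/-!
For `s ≤ 0` the map `(a, b) ↦ b ^ s * a ^ (1 - s)` is the perspective of the convex function
`x ↦ x ^ (1 - s)`, so its sum can only decrease under coarse-graining. Concretely, weighted Hölder
with weights `b i * w i` applied to `a i / b i` gives
`(∑ a i * w i) ^ (1 - s) * (∑ b i * w i) ^ s ≤ ∑ w i * (b i ^ s * a i ^ (1 - s))`.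
With `w = 1 - f ≤ 1` the right side is at most the full sum: the outcome where the test accepts
contributes a nonnegative term, which is dropped.
-/

open Finset Real

lemma mul_div_rpow_one_sub {a b : ℝ} (ha : 0 ≤ a) (hb : 0 < b) (s : ℝ) :
    b * (a / b) ^ (1 - s) = b ^ s * a ^ (1 - s) := by
  have hbs : b / b ^ (1 - s) = b ^ s := by
    rw [div_eq_iff (rpow_pos_of_pos hb _).ne', ← rpow_add hb, add_sub_cancel, rpow_one]
  rw [div_rpow ha hb.le, mul_div_left_comm, hbs, mul_comm]

-- Only `≤`, since `0 ^ s = 0` for `s ≠ 0`; this absorbs the case `∑ i ∈ t, b i * w i = 0` below.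
lemma rpow_mul_rpow_neg_le_one {x : ℝ} (hx : 0 ≤ x) (s : ℝ) : x ^ s * x ^ (-s) ≤ 1 := by
  rw [rpow_neg hx]
  exact mul_inv_le_one

theorem sum_mul_rpow_mul_sum_mul_rpow_le {ι : Type*} (t : Finset ι) {a b w : ι → ℝ}
    (ha : ∀ i, 0 ≤ a i) (hb : ∀ i, 0 < b i) (hw : ∀ i, 0 ≤ w i) {s : ℝ} (hs : s ≤ 0) :
    (∑ i ∈ t, a i * w i) ^ (1 - s) * (∑ i ∈ t, b i * w i) ^ s ≤
      ∑ i ∈ t, w i * (b i ^ s * a i ^ (1 - s)) := by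
  set A := ∑ i ∈ t, a i * w i
  set B := ∑ i ∈ t, b i * w i
  set S := ∑ i ∈ t, w i * (b i ^ s * a i ^ (1 - s))
  have hA : 0 ≤ A := sum_nonneg fun i _ => mul_nonneg (ha i) (hw i)
  have hB : 0 ≤ B := sum_nonneg fun i _ => mul_nonneg (hb i).le (hw i)
  have hS : 0 ≤ S := sum_nonneg fun i _ => by have := ha i; have := hb i; have := hw i; positivity
  have holder : A ≤ B ^ (1 - (1 - s)⁻¹) * S ^ (1 - s)⁻¹ := by
    have hlin (i : ι) : b i * w i * (a i / b i) = a i * w i := by field_simp [(hb i).ne']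
    have hpow (i : ι) : b i * w i * (a i / b i) ^ (1 - s) = w i * (b i ^ s * a i ^ (1 - s)) := by
      rw [mul_right_comm, mul_div_rpow_one_sub (ha i) (hb i), mul_comm]
    simpa only [hlin, hpow] using inner_le_weight_mul_Lp_of_nonneg t (show 1 ≤ 1 - s by linarith)
      (fun i => b i * w i) (fun i => a i / b i)
      (fun i => mul_nonneg (hb i).le (hw i)) (fun i => div_nonneg (ha i) (hb i).le)
  calc A ^ (1 - s) * B ^ s
      ≤ (B ^ (1 - (1 - s)⁻¹) * S ^ (1 - s)⁻¹) ^ (1 - s) * B ^ s :=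
        mul_le_mul_of_nonneg_right (rpow_le_rpow hA holder (by linarith)) (rpow_nonneg hB s)
    _ = S * (B ^ s * B ^ (-s)) := by
      rw [mul_rpow (rpow_nonneg hB _) (rpow_nonneg hS _), ← rpow_mul hB, ← rpow_mul hS,
        inv_mul_cancel₀ (by linarith), rpow_one, sub_mul, inv_mul_cancel₀ (by linarith),
        one_mul, sub_sub_cancel_left]
      ring
    _ ≤ S := mul_le_of_le_one_right hS (rpow_mul_rpow_neg_le_one hB s)

theorem stmt6_general {Y : Type*} [Fintype Y] (P Pb : Y → ℝ)
    (hP : ∀ y, 0 < P y) (hPb : ∀ y, 0 < Pb y)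
    (f : Y → ℝ) (hf : ∀ y, f y ∈ Set.Icc (0 : ℝ) 1) (s : ℝ) (hs : s ≤ 0) :
    (∑ y, P y * (1 - f y)) ^ (1 - s) * (∑ y, Pb y * (1 - f y)) ^ s ≤
      ∑ y, Pb y ^ s * P y ^ (1 - s) :=
  calc _ ≤ ∑ y, (1 - f y) * (Pb y ^ s * P y ^ (1 - s)) :=
        sum_mul_rpow_mul_sum_mul_rpow_le univ (fun y => (hP y).le) hPb
          (fun y => sub_nonneg.2 (hf y).2) hs
    _ ≤ ∑ y, Pb y ^ s * P y ^ (1 - s) := sum_le_sum fun y _ =>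
        mul_le_of_le_one_left (by have := hP y; have := hPb y; positivity) (sub_le_self _ (hf y).1)

theorem stmt6 {Y : Type*} [Fintype Y] (P Pb : Y → ℝ)
    (hP : ∀ y, 0 < P y) (hPb : ∀ y, 0 < Pb y)
    (hP1 : ∑ y, P y = 1) (hPb1 : ∑ y, Pb y = 1)
    (f : Y → ℝ) (hf : ∀ y, f y ∈ Set.Icc (0 : ℝ) 1) (s : ℝ) (hs : s ≤ 0) :
    (∑ y, P y * (1 - f y)) ^ (1 - s) * (∑ y, Pb y * (1 - f y)) ^ s ≤
      ∑ y, Pb y ^ s * P y ^ (1 - s) :=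
  stmt6_general P Pb hP hPb f hf s hs
end

section
/- Let W, W̄ be channels from a finite input set X to a finite output set Y, let P⃗ⁿ = (P¹,…,Pⁿ) be any adaptive strategy (Pᵏ a conditional distribution of the k-th input given the first k−1 input-output pairs), and let Q_{W,P⃗ⁿ} denote the resulting joint distribution on (X×Y)ⁿ under W. Then D(Q_{W,P⃗ⁿ} ‖ Q_{W̄,P⃗ⁿ}) = Σ_{k=1}^n D(W‖W̄ | P_{W,P⃗ᵏ}) ≤ n · sup_{x∈X} D(W_x‖W̄_x), where P_{W,P⃗ᵏ} is the marginal distribution of the k-th input under W and D(W‖W̄|P) = Σ_x P(x) D(W_x‖W̄_x). -/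
/-! The law of the first `n + 1` input-output pairs is the law of the first `n` pairs times the
kernel `strat n h x · W x y` (resp. `· W̄ x y`) of the next pair given the history `h`. The chain
rule for KL divergence therefore adds, at step `n`, the divergence of these kernels averaged over
histories, which is `∑ₓ inMarg W strat n x · D(W_x‖W̄_x)`; being an average of `D(W_x‖W̄_x)`, it is
at most their supremum. -/

open Filter

/-- `W` is a (classical) channel from `X` to `Y` with full-support outputs. -/
def IsChannel {X Y : Type*} [Fintype Y] (W : X → Y → ℝ) : Prop :=
  ∀ x, (∀ y, 0 < W x y) ∧ ∑ y, W x y = 1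

/-- An adaptive strategy: for each step `k`, a conditional distribution of the
`(k+1)`-st input given the first `k` input-output pairs. -/
def IsStrategy {X Y : Type*} [Fintype X]
    (strat : (k : ℕ) → (Fin k → X × Y) → X → ℝ) : Prop :=
  ∀ k h, (∀ x, 0 ≤ strat k h x) ∧ ∑ x, strat k h x = 1

/-- Joint distribution of `n` adaptive input-output pairs under channel `W`. -/
noncomputable def Qdist {X Y : Type*} [Fintype X] [Fintype Y] (W : X → Y → ℝ)
    (strat : (k : ℕ) → (Fin k → X × Y) → X → ℝ) (n : ℕ) (h : Fin n → X × Y) : ℝ :=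
  ∏ k : Fin n,
    strat k.1 (fun j : Fin k.1 => h ⟨j.1, j.2.trans k.2⟩) (h k).1 * W (h k).1 (h k).2

/-- Marginal distribution of the `(k+1)`-st input under channel `W`. -/
noncomputable def inMarg {X Y : Type*} [Fintype X] [Fintype Y] (W : X → Y → ℝ)
    (strat : (k : ℕ) → (Fin k → X × Y) → X → ℝ) (k : ℕ) (x : X) : ℝ :=
  ∑ h : Fin k → X × Y, Qdist W strat k h * strat k h x

/-- Kullback–Leibler divergence of finitely supported distributions. -/
noncomputable def Dkl {α : Type*} [Fintype α] (P Q : α → ℝ) : ℝ :=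
  ∑ a, P a * Real.log (P a / Q a)

/-- `φ(s|P‖Q) = log ∑ Q^s P^{1-s}`. -/
noncomputable def phiRel {α : Type*} [Fintype α] (s : ℝ) (P Q : α → ℝ) : ℝ :=
  Real.log (∑ a, Q a ^ s * P a ^ (1 - s))


open Finset Real

section Divergence

variable {α β : Type*} [Fintype α] [Fintype β]

lemma Dkl_congr_equiv (e : β ≃ α) {P Q : α → ℝ} {P' Q' : β → ℝ} (hP : ∀ b, P' b = P (e b))
    (hQ : ∀ b, Q' b = Q (e b)) : Dkl P' Q' = Dkl P Q :=
  Fintype.sum_equiv e _ _ fun b => by rw [hP, hQ]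

lemma Dkl_self (P : α → ℝ) : Dkl P P = 0 :=
  sum_eq_zero fun a _ => by rcases eq_or_ne (P a) 0 with h | h <;> simp [h]

lemma mul_mul_log_div_mul_mul {p q k l : ℝ} (hpq : p ≠ 0 → q ≠ 0) (hkl : k ≠ 0 → l ≠ 0) :
    p * k * log (p * k / (q * l)) = k * (p * log (p / q)) + p * (k * log (k / l)) := by
  rcases eq_or_ne p 0 with rfl | hp
  · simp
  rcases eq_or_ne k 0 with rfl | hk
  · simp
  rw [mul_div_mul_comm, log_mul (div_ne_zero hp (hpq hp)) (div_ne_zero hk (hkl hk))]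
  ring

lemma sum_prod_mul_kernel (P : α → ℝ) {K : α → β → ℝ} (hK : ∀ a, ∑ b, K a b = 1) :
    ∑ ab : α × β, P ab.1 * K ab.1 ab.2 = ∑ a, P a := by
  simp only [Fintype.sum_prod_type, ← mul_sum, hK, mul_one]

/- Only absolute continuity is assumed: terms where `P a * K a b = 0` vanish on both sides because
`0 * log _ = 0`, whatever the value of the logarithm. -/
theorem Dkl_chain_rule {P Q : α → ℝ} {K L : α → β → ℝ} (hPQ : ∀ a, P a ≠ 0 → Q a ≠ 0)
    (hKL : ∀ a b, K a b ≠ 0 → L a b ≠ 0) (hK : ∀ a, ∑ b, K a b = 1) :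
    Dkl (fun ab : α × β => P ab.1 * K ab.1 ab.2) (fun ab => Q ab.1 * L ab.1 ab.2) =
      Dkl P Q + ∑ a, P a * Dkl (K a) (L a) := by
  simp only [Dkl, Fintype.sum_prod_type, mul_mul_log_div_mul_mul (hPQ _) (hKL _ _),
    sum_add_distrib, ← sum_mul, ← mul_sum, hK, one_mul]

lemma sum_mul_le_ciSup {p f : α → ℝ} (hp0 : ∀ a, 0 ≤ p a) (hp1 : ∑ a, p a = 1) :
    ∑ a, p a * f a ≤ ⨆ a, f a :=
  calc ∑ a, p a * f a ≤ ∑ a, p a * ⨆ a, f a :=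
        sum_le_sum fun a _ =>
          mul_le_mul_of_nonneg_left (le_ciSup (Set.finite_range f).bddAbove a) (hp0 a)
    _ = ⨆ a, f a := by rw [← sum_mul, hp1, one_mul]

end Divergence

def finSnocEquiv {α : Type*} (n : ℕ) : (Fin n → α) × α ≃ (Fin (n + 1) → α) :=
  (Equiv.prodComm _ _).trans (Fin.snocEquiv fun _ => α)

def stepKernel {X Y : Type*} (W : X → Y → ℝ) (strat : (k : ℕ) → (Fin k → X × Y) → X → ℝ)
    (n : ℕ) (h : Fin n → X × Y) : X × Y → ℝ :=
  fun p => strat n h p.1 * W p.1 p.2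

lemma stepKernel_ne_zero_of_ne_zero {X Y : Type*} {W Wb : X → Y → ℝ}
    {strat : (k : ℕ) → (Fin k → X × Y) → X → ℝ} (hWb : ∀ x y, Wb x y ≠ 0) {n : ℕ}
    {h : Fin n → X × Y} {p : X × Y} (hK : stepKernel W strat n h p ≠ 0) :
    stepKernel Wb strat n h p ≠ 0 :=
  mul_ne_zero (left_ne_zero_of_mul hK) (hWb _ _)

section Adaptive

variable {X Y : Type*} [Fintype X] [Fintype Y] {W Wb : X → Y → ℝ}
  {strat : (k : ℕ) → (Fin k → X × Y) → X → ℝ}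

lemma Qdist_snoc (n : ℕ) (h : Fin n → X × Y) (p : X × Y) :
    Qdist W strat (n + 1) (Fin.snoc h p) = Qdist W strat n h * stepKernel W strat n h p := by
  have hlt (k : Fin n) (j : Fin k) : (j : ℕ) < n := j.2.trans k.2
  simp [Qdist, stepKernel, Fin.prod_univ_castSucc, Fin.snoc, hlt]

lemma Qdist_nonneg (hW : ∀ x y, 0 ≤ W x y) (hs : ∀ k h x, 0 ≤ strat k h x) (n : ℕ)
    (h : Fin n → X × Y) : 0 ≤ Qdist W strat n h :=
  prod_nonneg fun _ _ => mul_nonneg (hs _ _ _) (hW _ _)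

lemma Qdist_ne_zero_of_ne_zero (hWb : ∀ x y, Wb x y ≠ 0) {n : ℕ} {h : Fin n → X × Y}
    (hQ : Qdist W strat n h ≠ 0) : Qdist Wb strat n h ≠ 0 := by
  simp only [Qdist, prod_ne_zero_iff, mem_univ, forall_const, ne_eq, mul_eq_zero, not_or] at hQ ⊢
  exact fun k => ⟨(hQ k).1, hWb _ _⟩

lemma sum_stepKernel (hW : ∀ x, ∑ y, W x y = 1) (hs : ∀ k h, ∑ x, strat k h x = 1)
    (n : ℕ) (h : Fin n → X × Y) : ∑ p, stepKernel W strat n h p = 1 := by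
  unfold stepKernel
  rw [sum_prod_mul_kernel _ hW, hs]

lemma Dkl_stepKernel (hW : ∀ x, ∑ y, W x y = 1) (hWb : ∀ x y, Wb x y ≠ 0) (n : ℕ)
    (h : Fin n → X × Y) :
    Dkl (stepKernel W strat n h) (stepKernel Wb strat n h) =
      ∑ x, strat n h x * Dkl (W x) (Wb x) := by
  unfold stepKernel
  rw [Dkl_chain_rule (fun _ => id) (fun x y _ => hWb x y) hW, Dkl_self, zero_add]

lemma sum_Qdist (hW : ∀ x, ∑ y, W x y = 1) (hs : ∀ k h, ∑ x, strat k h x = 1) (n : ℕ) :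
    ∑ h, Qdist W strat n h = 1 := by
  induction n with
  | zero => simp [Qdist]
  | succ n ih =>
    calc ∑ g, Qdist W strat (n + 1) g
        = ∑ hp : (Fin n → X × Y) × (X × Y),
            Qdist W strat n hp.1 * stepKernel W strat n hp.1 hp.2 :=
          (Fintype.sum_equiv (finSnocEquiv n) _ _ fun hp => (Qdist_snoc n hp.1 hp.2).symm).symm
      _ = 1 := by rw [sum_prod_mul_kernel _ (sum_stepKernel hW hs n), ih]

lemma Dkl_Qdist_succ (hW : ∀ x, ∑ y, W x y = 1) (hWb : ∀ x y, Wb x y ≠ 0)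
    (hs : ∀ k h, ∑ x, strat k h x = 1) (n : ℕ) :
    Dkl (Qdist W strat (n + 1)) (Qdist Wb strat (n + 1)) =
      Dkl (Qdist W strat n) (Qdist Wb strat n) + ∑ x, inMarg W strat n x * Dkl (W x) (Wb x) := by
  rw [← Dkl_congr_equiv (finSnocEquiv n) (fun hp => (Qdist_snoc (W := W) n hp.1 hp.2).symm)
      (fun hp => (Qdist_snoc (W := Wb) n hp.1 hp.2).symm),
    Dkl_chain_rule (P := Qdist W strat n) (Q := Qdist Wb strat n)
      (fun _ => Qdist_ne_zero_of_ne_zero hWb) (fun _ _ => stepKernel_ne_zero_of_ne_zero hWb)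
      (sum_stepKernel hW hs n)]
  simp only [Dkl_stepKernel hW hWb, inMarg, mul_sum, sum_mul, mul_assoc]
  rw [sum_comm]

lemma inMarg_nonneg (hW : ∀ x y, 0 ≤ W x y) (hs : ∀ k h x, 0 ≤ strat k h x) (n : ℕ) (x : X) :
    0 ≤ inMarg W strat n x :=
  sum_nonneg fun h _ => mul_nonneg (Qdist_nonneg hW hs n h) (hs n h x)

lemma sum_inMarg (hW : ∀ x, ∑ y, W x y = 1) (hs : ∀ k h, ∑ x, strat k h x = 1) (n : ℕ) :
    ∑ x, inMarg W strat n x = 1 := by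
  simp only [inMarg]
  rw [sum_comm]
  simp only [← mul_sum, hs, mul_one, sum_Qdist hW hs]

theorem Dkl_Qdist_eq_sum (hW : ∀ x, ∑ y, W x y = 1) (hWb : ∀ x y, Wb x y ≠ 0)
    (hs : ∀ k h, ∑ x, strat k h x = 1) (n : ℕ) :
    Dkl (Qdist W strat n) (Qdist Wb strat n) =
      ∑ k ∈ range n, ∑ x, inMarg W strat k x * Dkl (W x) (Wb x) := by
  induction n with
  | zero => simp [Dkl, Qdist]
  | succ n ih => rw [Dkl_Qdist_succ hW hWb hs, ih, sum_range_succ]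

end Adaptive

theorem stmt8_general {X Y : Type*} [Fintype X] [Fintype Y]
    (W Wb : X → Y → ℝ) (hW : IsChannel W) (hWb : IsChannel Wb)
    (strat : (k : ℕ) → (Fin k → X × Y) → X → ℝ) (hstrat : IsStrategy strat)
    (n : ℕ) :
    Dkl (Qdist W strat n) (Qdist Wb strat n) =
      ∑ k ∈ Finset.range n, ∑ x, inMarg W strat k x * Dkl (W x) (Wb x) ∧
    Dkl (Qdist W strat n) (Qdist Wb strat n) ≤ n * ⨆ x, Dkl (W x) (Wb x) := by
  have hW1 x := (hW x).2
  have hW0 x y := ((hW x).1 y).le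
  have hWb0 x y := ((hWb x).1 y).ne'
  have hs1 k h := (hstrat k h).2
  have hs0 k h := (hstrat k h).1
  have hchain := Dkl_Qdist_eq_sum hW1 hWb0 hs1 n
  refine ⟨hchain, hchain ▸ ?_⟩
  calc ∑ k ∈ range n, ∑ x, inMarg W strat k x * Dkl (W x) (Wb x)
      ≤ ∑ _k ∈ range n, ⨆ x, Dkl (W x) (Wb x) :=
        sum_le_sum fun k _ => sum_mul_le_ciSup (inMarg_nonneg hW0 hs0 k) (sum_inMarg hW1 hs1 k)
    _ = n * ⨆ x, Dkl (W x) (Wb x) := by rw [sum_const, card_range, nsmul_eq_mul]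

theorem stmt8 {X Y : Type*} [Fintype X] [Fintype Y] [Nonempty X]
    (W Wb : X → Y → ℝ) (hW : IsChannel W) (hWb : IsChannel Wb)
    (strat : (k : ℕ) → (Fin k → X × Y) → X → ℝ) (hstrat : IsStrategy strat)
    (n : ℕ) :
    Dkl (Qdist W strat n) (Qdist Wb strat n) =
      ∑ k ∈ Finset.range n, ∑ x, inMarg W strat k x * Dkl (W x) (Wb x) ∧
    Dkl (Qdist W strat n) (Qdist Wb strat n) ≤ n * ⨆ x, Dkl (W x) (Wb x) :=
  stmt8_general W Wb hW hWb strat hstrat n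
end
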